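/- Let 0 < q < 1 and d ∈ ℂ. For every s ∈ ℕ and every symmetric polynomial F ∈ ℂ[t_0,…,t_s], there exists a polynomial G ∈ ℂ[x] such that for all z ∈ ℂ∖{0}: F( η_d(z), η_d(qz), …, η_d(q^s z) ) = G( η_{d q^s}(z) ). (Any symmetric polynomial in the q-Racah sinusoidal coordinates at x, x+1, …, x+s is a polynomial in the parameter-shifted coordinate.) -/

import Mathlib

/-!
Put `e = d q^s`. The involution `z ↦ (e z)⁻¹` sends `η_d(q^j z)` to `η_d(q^(s-j) z)`, so
evaluating a symmetric `F` at these coordinates gives an invariant `f` of the involution, and `f`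
is a Laurent polynomial in `z` with exponents in `[-n, n]` for some `n`. Every such invariant is a
polynomial in `η_e(z) = z⁻¹ - (1 + e) + e z`: subtracting `c η_e^n`, where `c` is the coefficient
of `z^(-n)`, kills that coefficient, invariance then kills the coefficient of `z^n`, and we
conclude by induction on `n`. For `d = 0` every coordinate is already an affine function of
`η_0(z) = z⁻¹ - 1`.
-/

open Polynomial

variable {K : Type*} [Field K]

def qRacahEta (e z : K) : K := (z⁻¹ - 1) * (1 - e * z)

theorem qRacahEta_inv_mul {e : K} (he : e ≠ 0) (z : K) :
    qRacahEta e (e * z)⁻¹ = qRacahEta e z := by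
  rcases eq_or_ne z 0 with rfl | hz
  · simp
  · unfold qRacahEta
    field_simp
    ring

theorem qRacahEta_pow_mul_inv {d q : K} (hd : d ≠ 0) (hq : q ≠ 0) {j s : ℕ} (hj : j ≤ s) (z : K) :
    qRacahEta d (q ^ j * (d * q ^ s * z)⁻¹) = qRacahEta d (q ^ (s - j) * z) := by
  have h : q ^ j * (d * q ^ s * z)⁻¹ = (d * (q ^ (s - j) * z))⁻¹ := by
    rw [← pow_sub_mul_pow q hj, mul_inv, mul_inv, mul_inv, mul_inv, mul_inv]
    field_simp
  rw [h, qRacahEta_inv_mul hd]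

def IsLaurentOfWidth (n : ℕ) (f : K → K) : Prop :=
  ∃ P : K[X], P.natDegree ≤ 2 * n ∧ ∀ z ≠ 0, z ^ n * f z = P.eval z

namespace IsLaurentOfWidth

theorem const (a : K) : IsLaurentOfWidth 0 (fun _ => a) :=
  ⟨C a, by simp, fun z _ => by simp⟩

theorem mono {n m : ℕ} {f : K → K} (hf : IsLaurentOfWidth n f) (hnm : n ≤ m) :
    IsLaurentOfWidth m f := by
  obtain ⟨P, hP, hfP⟩ := hf
  refine ⟨X ^ (m - n) * P, ?_, fun z hz => ?_⟩
  · exact natDegree_mul_le.trans (by rw [natDegree_X_pow]; omega)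
  · rw [eval_mul, eval_pow, eval_X, ← hfP z hz, ← mul_assoc, ← pow_add, Nat.sub_add_cancel hnm]

theorem add {n : ℕ} {f g : K → K} (hf : IsLaurentOfWidth n f) (hg : IsLaurentOfWidth n g) :
    IsLaurentOfWidth n (f + g) := by
  obtain ⟨P, hP, hfP⟩ := hf
  obtain ⟨Q, hQ, hgQ⟩ := hg
  exact ⟨P + Q, natDegree_add_le_of_degree_le hP hQ, fun z hz => by
    simp [mul_add, hfP z hz, hgQ z hz]⟩

theorem mul {n m : ℕ} {f g : K → K} (hf : IsLaurentOfWidth n f) (hg : IsLaurentOfWidth m g) :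
    IsLaurentOfWidth (n + m) (f * g) := by
  obtain ⟨P, hP, hfP⟩ := hf
  obtain ⟨Q, hQ, hgQ⟩ := hg
  refine ⟨P * Q, natDegree_mul_le_of_le hP hQ |>.trans (by omega), fun z hz => ?_⟩
  rw [eval_mul, ← hfP z hz, ← hgQ z hz, Pi.mul_apply, pow_add]
  ring

theorem of_coeff_zero_eq_zero {n : ℕ} {f : K → K} {P : K[X]} (hP : P.natDegree ≤ 2 * (n + 1))
    (hfP : ∀ z ≠ 0, z ^ (n + 1) * f z = P.eval z) (h0 : P.coeff 0 = 0)
    (htop : P.coeff (2 * (n + 1)) = 0) : IsLaurentOfWidth n f := by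
  have hP' : P.natDegree ≤ 2 * n + 1 :=
    natDegree_le_iff_coeff_eq_zero.mpr fun i hi => by
      rcases (show 2 * (n + 1) ≤ i by omega).eq_or_lt with rfl | hlt
      · exact htop
      · exact coeff_eq_zero_of_natDegree_lt (by omega)
  refine ⟨P.divX, by rw [natDegree_divX_eq_natDegree_tsub_one]; omega, fun z hz => ?_⟩
  have hXP : X * P.divX = P := by simpa [h0] using X_mul_divX_add P
  apply mul_left_cancel₀ hz
  rw [← mul_assoc, ← pow_succ', hfP z hz]
  conv_lhs => rw [← hXP]
  simp

end IsLaurentOfWidth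

theorem isLaurentOfWidth_one_qRacahEta_mul (d : K) {a : K} (ha : a ≠ 0) :
    IsLaurentOfWidth 1 (fun z => qRacahEta d (a * z)) := by
  refine ⟨(C a⁻¹ - X) * (1 - C (d * a) * X), by compute_degree, fun z hz => ?_⟩
  simp only [qRacahEta, pow_one, eval_mul, eval_sub, eval_C, eval_X, eval_one]
  field_simp

theorem exists_isLaurentOfWidth_mvPolynomial_eval {σ : Type*} {v : σ → K → K}
    (hv : ∀ j, ∃ n, IsLaurentOfWidth n (v j)) (F : MvPolynomial σ K) :
    ∃ n, IsLaurentOfWidth n (fun z => MvPolynomial.eval (fun j => v j z) F) := by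
  induction F using MvPolynomial.induction_on with
  | C a => exact ⟨0, by simpa using IsLaurentOfWidth.const a⟩
  | add F G hF hG =>
    obtain ⟨n, hn⟩ := hF
    obtain ⟨m, hm⟩ := hG
    simp only [map_add]
    exact ⟨n + m, (hn.mono (by omega)).add (hm.mono (by omega))⟩
  | mul_X F j hF =>
    obtain ⟨n, hn⟩ := hF
    obtain ⟨m, hm⟩ := hv j
    simp only [map_mul, MvPolynomial.eval_X]
    exact ⟨n + m, hn.mul hm⟩

theorem eval_reflect_of_ne_zero {N : ℕ} {P : K[X]} (hP : P.natDegree ≤ N) {u : K} (hu : u ≠ 0) :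
    (reflect N P).eval u = u ^ N * P.eval u⁻¹ := by
  let := invertibleOfNonzero (inv_ne_zero hu)
  have h := eval₂_reflect_mul_pow (RingHom.id K) u⁻¹ N P hP
  rw [invOf_eq_inv, inv_inv, ← eval, ← eval] at h
  rw [← h, inv_pow, mul_left_comm, mul_inv_cancel₀ (pow_ne_zero N hu), mul_one]

theorem MvPolynomial.eval_polynomial_eval {σ R : Type*} [CommRing R] (p : σ → R[X])
    (F : MvPolynomial σ R) (t : R) :
    MvPolynomial.eval (fun j => (p j).eval t) F = (MvPolynomial.aeval p F).eval t := by
  simpa using (DFunLike.congr_fun (MvPolynomial.comp_aeval (Polynomial.aeval t) (f := p)) F).symm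

section Infinite

variable [Infinite K]

theorem eq_of_eval_eq_of_ne_zero {P Q : K[X]} (h : ∀ z ≠ 0, P.eval z = Q.eval z) : P = Q :=
  eq_of_infinite_eval_eq P Q <| (Set.finite_singleton 0).infinite_compl.mono fun z hz => h z hz

theorem coeff_two_mul_eq_of_inv_mul_invariant {e : K} (he : e ≠ 0) {n : ℕ} {f : K → K} {P : K[X]}
    (hP : P.natDegree ≤ 2 * n) (hfP : ∀ z ≠ 0, z ^ n * f z = P.eval z)
    (hf : ∀ z, f (e * z)⁻¹ = f z) : P.coeff (2 * n) = e ^ n * P.coeff 0 := by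
  have hrefl : P.comp (C e⁻¹ * X) = C (e⁻¹ ^ n) * reflect (2 * n) P := by
    refine eq_of_eval_eq_of_ne_zero fun u hu => ?_
    have hz : e⁻¹ * u ≠ 0 := mul_ne_zero (inv_ne_zero he) hu
    have hu' : (e * (e⁻¹ * u))⁻¹ = u⁻¹ := by rw [mul_inv_cancel_left₀ he]
    calc (P.comp (C e⁻¹ * X)).eval u = (e⁻¹ * u) ^ n * f u⁻¹ := by
          rw [eval_comp, eval_mul, eval_C, eval_X, ← hfP _ hz, ← hf, hu']
      _ = e⁻¹ ^ n * (u ^ (2 * n) * (u⁻¹ ^ n * f u⁻¹)) := by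
          have hu1 : u ^ n * u⁻¹ ^ n = 1 := by rw [← mul_pow, mul_inv_cancel₀ hu, one_pow]
          linear_combination (-(e⁻¹ ^ n * u ^ n * f u⁻¹)) * hu1
      _ = (C (e⁻¹ ^ n) * reflect (2 * n) P).eval u := by
          rw [hfP _ (inv_ne_zero hu), eval_mul, eval_C, eval_reflect_of_ne_zero hP hu]
  have := congrArg (coeff · (2 * n)) hrefl
  simp only [comp_C_mul_X_coeff, coeff_C_mul, coeff_reflect, revAt_le le_rfl, Nat.sub_self] at this
  rw [two_mul, pow_add, inv_pow] at this
  field_simp at this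
  rwa [two_mul]

theorem exists_polynomial_qRacahEta_of_inv_mul_invariant {e : K} (he : e ≠ 0) {n : ℕ} {f : K → K}
    (hfn : IsLaurentOfWidth n f) (hf : ∀ z, f (e * z)⁻¹ = f z) :
    ∃ G : K[X], ∀ z ≠ 0, f z = G.eval (qRacahEta e z) := by
  induction n generalizing f with
  | zero =>
    obtain ⟨P, hP, hfP⟩ := hfn
    refine ⟨C (P.coeff 0), fun z hz => ?_⟩
    rw [eq_C_of_natDegree_le_zero (p := P) (by simpa using hP)] at hfP
    simpa using hfP z hz
  | succ n ih =>
    obtain ⟨P, hP, hfP⟩ := hfn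
    set c := P.coeff 0
    set R : K[X] := (1 - X) * (1 - C e * X)
    have hR : ∀ z ≠ 0, z * qRacahEta e z = R.eval z := fun z hz => by
      simp only [R, qRacahEta, eval_mul, eval_sub, eval_one, eval_X, eval_C]
      field_simp
    set g : K → K := fun z => f z - c * qRacahEta e z ^ (n + 1)
    have hgQ : ∀ z ≠ 0, z ^ (n + 1) * g z = (P - C c * R ^ (n + 1)).eval z := fun z hz => by
      simp only [g, eval_sub, eval_mul, eval_C, eval_pow, ← hR z hz, ← hfP z hz]
      ring
    have hQ : (P - C c * R ^ (n + 1)).natDegree ≤ 2 * (n + 1) := by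
      refine (natDegree_sub_le _ _).trans (max_le hP (natDegree_C_mul_le _ _ |>.trans ?_))
      have hR2 : R.natDegree ≤ 2 := by simp only [R]; compute_degree
      exact natDegree_pow_le_of_le (n + 1) hR2 |>.trans (by omega)
    have hg : ∀ z, g (e * z)⁻¹ = g z := fun z => by simp only [g, hf, qRacahEta_inv_mul he]
    have hQ0 : (P - C c * R ^ (n + 1)).coeff 0 = 0 := by simp [R, c, coeff_zero_eq_eval_zero]
    have hQtop := coeff_two_mul_eq_of_inv_mul_invariant he hQ hgQ hg
    rw [hQ0, mul_zero] at hQtop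
    obtain ⟨G, hG⟩ := ih (IsLaurentOfWidth.of_coeff_zero_eq_zero hQ hgQ hQ0 hQtop) hg
    refine ⟨G + C c * X ^ (n + 1), fun z hz => ?_⟩
    simp only [eval_add, eval_mul, eval_C, eval_pow, eval_X, ← hG z hz, g]
    ring

end Infinite

theorem qracah_symmetric_poly_in_shifted_eta_general (q : ℝ) (hq : 0 < q)
    (d : ℂ) (s : ℕ) (F : MvPolynomial (Fin (s + 1)) ℂ) (hF : F.IsSymmetric) :
    ∃ G : Polynomial ℂ, ∀ z : ℂ, z ≠ 0 →
      MvPolynomial.eval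
          (fun j : Fin (s + 1) =>
            (((q : ℂ) ^ (j : ℕ) * z)⁻¹ - 1) * (1 - d * ((q : ℂ) ^ (j : ℕ) * z))) F
        = G.eval ((z⁻¹ - 1) * (1 - d * (q : ℂ) ^ s * z)) := by
  have hq0 : (q : ℂ) ≠ 0 := by exact_mod_cast hq.ne'
  rcases eq_or_ne d 0 with rfl | hd
  · refine ⟨MvPolynomial.aeval (fun j : Fin (s + 1) => C ((q : ℂ) ^ (j : ℕ))⁻¹ * (X + 1) - 1) F,
      fun z _ => ?_⟩
    rw [← MvPolynomial.eval_polynomial_eval]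
    congr 2 with j
    simp only [eval_sub, eval_mul, eval_C, eval_add, eval_X, eval_one, mul_inv]
    ring
  · set f := fun z =>
      MvPolynomial.eval (fun j : Fin (s + 1) => qRacahEta d ((q : ℂ) ^ (j : ℕ) * z)) F
    obtain ⟨n, hn⟩ := exists_isLaurentOfWidth_mvPolynomial_eval
      (fun j : Fin (s + 1) => ⟨1, isLaurentOfWidth_one_qRacahEta_mul d (pow_ne_zero (j : ℕ) hq0)⟩) F
    have hf : ∀ z, f (d * (q : ℂ) ^ s * z)⁻¹ = f z := fun z => by
      have hrev : (fun j : Fin (s + 1) => qRacahEta d ((q : ℂ) ^ (j : ℕ) * (d * (q : ℂ) ^ s * z)⁻¹))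
          = (fun j : Fin (s + 1) => qRacahEta d ((q : ℂ) ^ (j : ℕ) * z)) ∘ Fin.revPerm := by
        funext j
        rw [Function.comp_apply, Fin.revPerm_apply, Fin.val_rev,
          qRacahEta_pow_mul_inv hd hq0 j.is_le]
        congr 3
        omega
      simp only [f, hrev, ← MvPolynomial.eval_rename, hF Fin.revPerm]
    exact exists_polynomial_qRacahEta_of_inv_mul_invariant
      (mul_ne_zero hd (pow_ne_zero s hq0)) hn hf

/-- Any symmetric polynomial in the q-Racah sinusoidal coordinates
`η_d(z), η_d(qz), …, η_d(q^s z)` (multiplicative variable `z = q^x`,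
`η_e(z) = (z⁻¹-1)(1-ez)`) is a polynomial in the parameter-shifted coordinate
`η_{dq^s}(z) = (z⁻¹-1)(1-dq^s z)`. -/
theorem qracah_symmetric_poly_in_shifted_eta (q : ℝ) (hq : 0 < q) (hq1 : q < 1)
    (d : ℂ) (s : ℕ) (F : MvPolynomial (Fin (s + 1)) ℂ) (hF : F.IsSymmetric) :
    ∃ G : Polynomial ℂ, ∀ z : ℂ, z ≠ 0 →
      MvPolynomial.eval
          (fun j : Fin (s + 1) =>
            (((q : ℂ) ^ (j : ℕ) * z)⁻¹ - 1) * (1 - d * ((q : ℂ) ^ (j : ℕ) * z))) F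
        = G.eval ((z⁻¹ - 1) * (1 - d * (q : ℂ) ^ s * z)) :=
  qracah_symmetric_poly_in_shifted_eta_general q hq d s F hF
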